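/- arXiv:1012.4495 — 4 statements merged into one kernel-verified Lean document; each statement's English description precedes it below -/
import Mathlib

section
/- Let M be a compact oriented Riemannian manifold with boundary. Suppose G is a p-form that is closed, coclosed, and its pullback to the boundary is exact: i*G = dC′ for some (p−1)-form C′ on ∂M. Suppose ξ is a (p+1)-form satisfying the Neumann condition i*(*ξ) = 0 with i*(*d*ξ) = 0. Then ⟨G, d*ξ⟩_{L²} = 0. -/
/-- Abstract data of Hodge theory on a compact oriented Riemannian `n`-manifold `M`
with boundary `∂M`.  Here `Ω p` plays the role of the space of smooth `p`-forms on `M`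
and `Ωb p` that of `p`-forms on `∂M`; `d` is the exterior derivative, `δ` the
codifferential `d^*`, `star` the Hodge star, `pull` the pullback `i^*` along the
inclusion `i : ∂M → M`, `db` the exterior derivative of `∂M`, `inn` the `L²` inner
product `⟨σ,τ⟩ = ∫_M σ ∧ *τ`, and `bint p α β = ∫_{∂M} α ∧ β` for `α` a `p`-form and
`β` an `(n-1-p)`-form on the boundary.  The axioms are the standard identities,
in particular `green` is Green's formula. -/
structure HodgeData (n : ℕ) (Ω : ℕ → Type) [∀ p, AddCommGroup (Ω p)]
    [∀ p, Module ℝ (Ω p)] (Ωb : ℕ → Type) [∀ p, AddCommGroup (Ωb p)]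
    [∀ p, Module ℝ (Ωb p)] : Type where
  d : ∀ p, Ω p →ₗ[ℝ] Ω (p + 1)
  δ : ∀ p, Ω p →ₗ[ℝ] Ω (p - 1)
  star : ∀ p, Ω p →ₗ[ℝ] Ω (n - p)
  pull : ∀ p, Ω p →ₗ[ℝ] Ωb p
  db : ∀ p, Ωb p →ₗ[ℝ] Ωb (p + 1)
  inn : ∀ p, Ω p →ₗ[ℝ] Ω p →ₗ[ℝ] ℝ
  bint : ∀ p, Ωb p →ₗ[ℝ] Ωb (n - p - 1) →ₗ[ℝ] ℝ
  inn_symm : ∀ p (α β : Ω p), inn p α β = inn p β α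
  inn_self_nonneg : ∀ p (α : Ω p), 0 ≤ inn p α α
  inn_def : ∀ p (α : Ω p), inn p α α = 0 → α = 0
  d_d : ∀ p (α : Ω p), d (p + 1) (d p α) = 0
  pull_d : ∀ p (α : Ω p), pull (p + 1) (d p α) = db p (pull p α)
  pull_surj : ∀ p, Function.Surjective (pull p)
  star_star : ∀ p (hp : p ≤ n) (ω : Ω p),
    star (n - p) (star p ω)
      = ((-1 : ℝ) ^ (p * (n - p))) • cast (congrArg Ω (Nat.sub_sub_self hp).symm) ω
  green : ∀ p (α : Ω p) (β : Ω (p + 1)),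
    inn (p + 1) (d p α) β - inn p α (δ (p + 1) β)
      = bint p (pull p α) (pull (n - (p + 1)) (star (p + 1) β))

namespace HodgeData

variable {n : ℕ} {Ω : ℕ → Type} [∀ p, AddCommGroup (Ω p)] [∀ p, Module ℝ (Ω p)]
  {Ωb : ℕ → Type} [∀ p, AddCommGroup (Ωb p)] [∀ p, Module ℝ (Ωb p)]

theorem inn_d_eq_inn_δ_of_pull_star_eq_zero (H : HodgeData n Ω Ωb) {p : ℕ} (α : Ω p)
    {β : Ω (p + 1)} (hβ : H.pull (n - (p + 1)) (H.star (p + 1) β) = 0) :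
    H.inn (p + 1) (H.d p α) β = H.inn p α (H.δ (p + 1) β) := by
  have green := H.green p α β
  rw [hβ, map_zero] at green
  exact sub_eq_zero.mp green

end HodgeData

theorem boundary_exact_orth_coexact_neumann_general
    {n : ℕ} {Ω : ℕ → Type} [∀ p, AddCommGroup (Ω p)] [∀ p, Module ℝ (Ω p)]
    {Ωb : ℕ → Type} [∀ p, AddCommGroup (Ωb p)] [∀ p, Module ℝ (Ωb p)]
    (H : HodgeData n Ω Ωb) (p : ℕ)
    (G : Ω (p + 1)) (hGclosed : H.d (p + 1) G = 0)
    (ξ : Ω (p + 2))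
    (hξN : H.pull (n - (p + 2)) (H.star (p + 2) ξ) = 0) :
    H.inn (p + 1) G (H.δ (p + 2) ξ) = 0 := by
  rw [← H.inn_d_eq_inn_δ_of_pull_star_eq_zero G hξN, hGclosed, map_zero, LinearMap.zero_apply]

/-- Let `G` be a `(p+1)`-form which is closed, coclosed, and whose
pullback to the boundary is exact, `i^*G = dC'` for some `p`-form `C'` on `∂M`.
Let `ξ` be a `(p+2)`-form satisfying the Neumann condition `i^*(*ξ) = 0` and such
that `i^*(*d^*ξ) = 0`.  Then `⟨G, d^*ξ⟩_{L²} = 0`. -/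
theorem boundary_exact_orth_coexact_neumann
    {n : ℕ} {Ω : ℕ → Type} [∀ p, AddCommGroup (Ω p)] [∀ p, Module ℝ (Ω p)]
    {Ωb : ℕ → Type} [∀ p, AddCommGroup (Ωb p)] [∀ p, Module ℝ (Ωb p)]
    (H : HodgeData n Ω Ωb) (p : ℕ)
    (G : Ω (p + 1)) (hGclosed : H.d (p + 1) G = 0) (hGcoclosed : H.δ (p + 1) G = 0)
    (C' : Ωb p) (hGbd : H.pull (p + 1) G = H.db p C')
    (ξ : Ω (p + 2))
    (hξN : H.pull (n - (p + 2)) (H.star (p + 2) ξ) = 0)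
    (hδξN : H.pull (n - (p + 1)) (H.star (p + 1) (H.δ (p + 2) ξ)) = 0) :
    H.inn (p + 1) G (H.δ (p + 2) ξ) = 0 :=
  boundary_exact_orth_coexact_neumann_general H p G hGclosed ξ hξN
end

section
/- Let 0 ≤ r < π/2 and define f(r) = (1 − sin⁶ r)/√((1 + sin⁶ r)² + (1/2) sin⁶ r). Then f(r) ∈ [0, 1) for r ∈ (0, π/2), f is strictly decreasing on (0, π/2), f(r) → 1 as r → 0⁺, and f(r) → 0 as r → π/2⁻. Hence the Poincaré duality angle θ(r) = arccos f(r) tends to 0 as r → 0 and to π/2 as r → π/2. -/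
/-!
Writing `s = sin⁶ r`, we have `pdCos r = pdProfile s` with
`pdProfile s = (1 - s) / √((1 + s)² + s / 2)`. On `[0, 1]` this profile is strictly decreasing
from `1` to `0`: for `a < b`, after squaring and clearing denominators, the difference of the
two sides is exactly `(9/2) (b - a) (1 - a b)`. Since `sin⁶` increases from `0` to `1` on
`[0, π/2]`, all claims follow, the limits by continuity of `pdCos` and `arccos`.
-/

open Real Filter Set

/-- The cosine of the Poincaré duality angle in degree 4 for `ℂP⁶` minus an open
ball of radius `r`. -/
noncomputable def pdCos (r : ℝ) : ℝ :=
  (1 - Real.sin r ^ 6) / Real.sqrt ((1 + Real.sin r ^ 6) ^ 2 + (1 / 2) * Real.sin r ^ 6)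

noncomputable def pdProfile (s : ℝ) : ℝ :=
  (1 - s) / √((1 + s) ^ 2 + (1 / 2) * s)

lemma pdCos_eq_pdProfile (r : ℝ) : pdCos r = pdProfile (sin r ^ 6) := rfl

lemma pdProfile_denom_pos {s : ℝ} (hs : 0 ≤ s) : 0 < √((1 + s) ^ 2 + (1 / 2) * s) :=
  Real.sqrt_pos.2 (by positivity)

lemma pdProfile_zero : pdProfile 0 = 1 := by
  simp [pdProfile]

lemma pdProfile_one : pdProfile 1 = 0 := by
  simp [pdProfile]

lemma strictAntiOn_pdProfile : StrictAntiOn pdProfile (Icc 0 1) := by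
  intro a ⟨ha, _⟩ b ⟨_, hb⟩ hab
  rw [pdProfile, pdProfile, div_lt_div_iff₀ (pdProfile_denom_pos (ha.trans hab.le))
    (pdProfile_denom_pos ha)]
  have hab_lt_one : a * b < 1 := by nlinarith
  rw [← Real.sqrt_sq (sub_nonneg.2 hb), ← Real.sqrt_sq (by linarith : 0 ≤ 1 - a),
    ← Real.sqrt_mul (sq_nonneg _), ← Real.sqrt_mul (sq_nonneg _)]
  refine Real.sqrt_lt_sqrt (by positivity) (sub_pos.1 ?_)
  have hdiff : (1 - a) ^ 2 * ((1 + b) ^ 2 + 1 / 2 * b) - (1 - b) ^ 2 * ((1 + a) ^ 2 + 1 / 2 * a)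
      = 9 / 2 * ((b - a) * (1 - a * b)) := by ring
  rw [hdiff]
  exact mul_pos (by norm_num) (mul_pos (sub_pos.2 hab) (sub_pos.2 hab_lt_one))

lemma strictMonoOn_sin_pow_six : StrictMonoOn (fun r => sin r ^ 6) (Icc 0 (π / 2)) := by
  refine (pow_left_strictMonoOn₀ (by norm_num)).comp
    (Real.strictMonoOn_sin.mono (Icc_subset_Icc_left (by linarith [pi_pos]))) ?_
  intro r ⟨h0, hr⟩
  exact sin_nonneg_of_nonneg_of_le_pi h0 (by linarith [pi_pos])

lemma sin_pow_six_mem_Icc (r : ℝ) : sin r ^ 6 ∈ Icc (0 : ℝ) 1 := by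
  have h : sin r ^ 6 = (sin r ^ 2) ^ 3 := by ring
  rw [h]
  exact ⟨by positivity, pow_le_one₀ (sq_nonneg _) (sin_sq_le_one r)⟩

lemma strictAntiOn_pdCos : StrictAntiOn pdCos (Icc 0 (π / 2)) :=
  strictAntiOn_pdProfile.comp_strictMonoOn strictMonoOn_sin_pow_six
    fun r _ => sin_pow_six_mem_Icc r

lemma pdCos_zero : pdCos 0 = 1 := by
  simp [pdCos_eq_pdProfile, pdProfile_zero]

lemma pdCos_pi_div_two : pdCos (π / 2) = 0 := by
  simp [pdCos_eq_pdProfile, pdProfile_one]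

lemma continuous_pdCos : Continuous pdCos :=
  (by fun_prop : Continuous fun r => 1 - sin r ^ 6).div (by fun_prop)
    fun r => (pdProfile_denom_pos (sin_pow_six_mem_Icc r).1).ne'

lemma pdCos_mem_Ico {r : ℝ} (hr : r ∈ Ioo 0 (π / 2)) : pdCos r ∈ Ico 0 1 := by
  have hr' : r ∈ Icc 0 (π / 2) := Ioo_subset_Icc_self hr
  have h0 : (0 : ℝ) ∈ Icc 0 (π / 2) := ⟨le_rfl, by linarith [pi_pos]⟩
  have hπ : π / 2 ∈ Icc 0 (π / 2) := ⟨by linarith [pi_pos], le_rfl⟩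
  refine ⟨?_, ?_⟩
  · simpa [pdCos_pi_div_two] using strictAntiOn_pdCos.antitoneOn hr' hπ hr.2.le
  · simpa [pdCos_zero] using strictAntiOn_pdCos h0 hr' hr.1

/-- For `f(r) = (1 − sin⁶ r)/√((1 + sin⁶ r)² + (1/2) sin⁶ r)`:
`f(r) ∈ [0,1)` for `r ∈ (0, π/2)`; `f` is strictly decreasing on `(0, π/2)`;
`f(r) → 1` as `r → 0⁺` and `f(r) → 0` as `r → π/2⁻`.  Hence the Poincaré duality
angle `θ(r) = arccos f(r)` tends to `0` as `r → 0⁺` and to `π/2` as `r → π/2⁻`. -/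
theorem pdCos_properties :
    (∀ r ∈ Ioo (0 : ℝ) (π / 2), pdCos r ∈ Ico (0 : ℝ) 1) ∧
    StrictAntiOn pdCos (Ioo (0 : ℝ) (π / 2)) ∧
    Tendsto pdCos (nhdsWithin 0 (Ioi (0 : ℝ))) (nhds 1) ∧
    Tendsto pdCos (nhdsWithin (π / 2) (Iio (π / 2))) (nhds 0) ∧
    Tendsto (fun r => Real.arccos (pdCos r)) (nhdsWithin 0 (Ioi (0 : ℝ))) (nhds 0) ∧
    Tendsto (fun r => Real.arccos (pdCos r)) (nhdsWithin (π / 2) (Iio (π / 2)))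
      (nhds (π / 2)) := by
  have hlim_zero : Tendsto pdCos (nhdsWithin 0 (Ioi 0)) (nhds 1) :=
    (continuous_pdCos.tendsto' 0 1 pdCos_zero).mono_left nhdsWithin_le_nhds
  have hlim_pi_div_two : Tendsto pdCos (nhdsWithin (π / 2) (Iio (π / 2))) (nhds 0) :=
    (continuous_pdCos.tendsto' _ 0 pdCos_pi_div_two).mono_left nhdsWithin_le_nhds
  exact ⟨fun r hr => pdCos_mem_Ico hr,
    strictAntiOn_pdCos.mono Ioo_subset_Icc_self,
    hlim_zero, hlim_pi_div_two,
    (continuous_arccos.tendsto' 1 0 arccos_one).comp hlim_zero,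
    (continuous_arccos.tendsto' 0 (π / 2) arccos_zero).comp hlim_pi_div_two⟩
end

section
/- Let 0 ≤ r < π/2 and define g(r) = (1 − sin⁵ r)/√((1 + sin⁵ r)² + (1/6) sin⁵ r). Then for all r ∈ (0, π/2), 0 < g(r) < 1, and 1 − g(r) = O(r⁵) as r → 0⁺; more precisely (1 − g(r))/r⁵ converges to a positive finite limit as r → 0⁺. -/
/-! With `s = sin⁵ r` we have `grCos r = P s` for `P = grCosProfile`, and `P 0 = 1`,
`P' 0 = -1 - 13/12 = -25/12`; hence `1 - grCos r ∼ (25/12) sin⁵ r ∼ (25/12) r⁵`.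
For `0 < s < 1`, the bound `P s < 1` reduces to `(1 - s)² < (1 + s)² + s / 6`. -/

open Real Filter Set Asymptotics

noncomputable def grCos (r : ℝ) : ℝ :=
  (1 - Real.sin r ^ 5) / Real.sqrt ((1 + Real.sin r ^ 5) ^ 2 + (1 / 6) * Real.sin r ^ 5)

open Topology

noncomputable def grCosProfile (s : ℝ) : ℝ := (1 - s) / √((1 + s) ^ 2 + (1 / 6) * s)

lemma grCos_eq_grCosProfile (r : ℝ) : grCos r = grCosProfile (sin r ^ 5) := rfl

lemma grCosProfile_zero : grCosProfile 0 = 1 := by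
  simp [grCosProfile]

lemma grCosProfile_pos {s : ℝ} (hs₀ : 0 ≤ s) (hs₁ : s < 1) : 0 < grCosProfile s :=
  div_pos (by linarith) (sqrt_pos.mpr (by positivity))

lemma grCosProfile_lt_one {s : ℝ} (hs : 0 < s) : grCosProfile s < 1 := by
  have hD : 0 < (1 + s) ^ 2 + (1 / 6) * s := by positivity
  rw [grCosProfile, div_lt_one (sqrt_pos.mpr hD)]
  exact lt_sqrt_of_sq_lt (by nlinarith)

lemma hasDerivAt_grCosProfile_zero : HasDerivAt grCosProfile (-25 / 12) 0 := by
  have hD : HasDerivAt (fun s : ℝ => (1 + s) ^ 2 + (1 / 6) * s) (13 / 6) 0 :=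
    ((((hasDerivAt_id' (0 : ℝ)).const_add 1).fun_pow 2).fun_add
      ((hasDerivAt_id' (0 : ℝ)).const_mul (1 / 6))).congr_deriv (by norm_num)
  exact (((hasDerivAt_id' (0 : ℝ)).const_sub 1).fun_div (hD.sqrt (by norm_num))
    (by norm_num)).congr_deriv (by norm_num)

lemma tendsto_one_sub_grCosProfile_div :
    Tendsto (fun s => (1 - grCosProfile s) / s) (𝓝[≠] 0) (𝓝 (25 / 12)) := by
  have := (hasDerivAt_iff_tendsto_slope.mp hasDerivAt_grCosProfile_zero).neg
  refine (this.congr fun s => ?_).trans (by norm_num)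
  rw [slope_def_field, grCosProfile_zero]
  ring

lemma tendsto_sin_pow_nhdsGT {n : ℕ} (hn : n ≠ 0) :
    Tendsto (fun r => sin r ^ n) (𝓝[>] 0) (𝓝[>] 0) := by
  refine tendsto_nhdsWithin_iff.mpr ⟨?_, ?_⟩
  · exact ((continuous_sin.fun_pow n).tendsto' 0 0 (by simp [hn])).mono_left nhdsWithin_le_nhds
  · filter_upwards [Ioo_mem_nhdsGT pi_pos] with r hr
    exact pow_pos (sin_pos_of_mem_Ioo hr) n

lemma tendsto_one_sub_grCos_div_pow_five :
    Tendsto (fun r => (1 - grCos r) / r ^ 5) (𝓝[>] 0) (𝓝 (25 / 12)) := by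
  have hsinc : Tendsto (fun r => sinc r ^ 5) (𝓝[>] 0) (𝓝 1) :=
    ((continuous_sinc.fun_pow 5).tendsto' 0 1 (by simp)).mono_left nhdsWithin_le_nhds
  have := (tendsto_one_sub_grCosProfile_div.comp
    ((tendsto_sin_pow_nhdsGT (n := 5) (by norm_num)).mono_right
      (nhdsWithin_mono _ fun x hx => ne_of_gt hx))).mul hsinc
  rw [mul_one] at this
  refine this.congr' ?_
  filter_upwards [Ioo_mem_nhdsGT pi_pos] with r hr
  have hr₀ : r ≠ 0 := hr.1.ne'
  have hs : sin r ≠ 0 := (sin_pos_of_mem_Ioo hr).ne'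
  rw [Function.comp_apply, grCos_eq_grCosProfile, sinc_of_ne_zero hr₀]
  field_simp

lemma sin_mem_Ioo_of_mem_Ioo {r : ℝ} (hr : r ∈ Ioo 0 (π / 2)) : sin r ∈ Ioo 0 1 := by
  refine ⟨sin_pos_of_pos_of_lt_pi hr.1 (by linarith [hr.2, pi_pos]), ?_⟩
  simpa using sin_lt_sin_of_lt_of_le_pi_div_two (by linarith [hr.1, pi_pos]) le_rfl hr.2

/-- For `g(r) = (1 − sin⁵ r)/√((1 + sin⁵ r)² + (1/6) sin⁵ r)`:
`0 < g(r) < 1` for all `r ∈ (0, π/2)`; `1 − g(r) = O(r⁵)` as `r → 0⁺`; and more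
precisely `(1 − g(r))/r⁵` converges to a positive finite limit as `r → 0⁺`. -/
theorem grCos_properties :
    (∀ r ∈ Ioo (0 : ℝ) (π / 2), 0 < grCos r ∧ grCos r < 1) ∧
    (fun r => 1 - grCos r) =O[nhdsWithin 0 (Ioi (0 : ℝ))] (fun r => r ^ 5) ∧
    (∃ L : ℝ, 0 < L ∧
      Tendsto (fun r => (1 - grCos r) / r ^ 5) (nhdsWithin 0 (Ioi (0 : ℝ)))
        (nhds L)) := by
  refine ⟨fun r hr => ?_, ?_, 25 / 12, by norm_num, tendsto_one_sub_grCos_div_pow_five⟩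
  · obtain ⟨hs₀, hs₁⟩ := sin_mem_Ioo_of_mem_Ioo hr
    exact ⟨grCosProfile_pos (by positivity) (pow_lt_one₀ hs₀.le hs₁ (by norm_num)),
      grCosProfile_lt_one (by positivity)⟩
  · refine isBigO_of_div_tendsto_nhds ?_ _ tendsto_one_sub_grCos_div_pow_five
    filter_upwards [self_mem_nhdsWithin] with r (hr : 0 < r) h
    exact absurd h (by positivity)
end

section
/- Let M be a compact oriented Riemannian manifold with boundary and let ω ∈ Ω^p(M) solve the boundary value problem Δω = 0, i*ω = φ, i*(d*ω) = 0 for given φ ∈ Ω^p(∂M). If ω′ is another solution, then ω − ω′ is a Dirichlet harmonic field: d(ω−ω′) = 0, d*(ω−ω′) = 0, and i*(ω−ω′) = 0. Hence the solution is unique up to addition of an element of Harm^p_D(M). -/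
/-! Green's formula with vanishing boundary term gives `‖d^*η‖² = ⟨dd^*η, η⟩` and
`‖dη‖² = ⟨η, d^*dη⟩` for the difference `η` of two solutions, so harmonicity
`dd^*η = -d^*dη` forces `‖d^*η‖² + ‖dη‖² = 0`. -/

namespace HodgeData

variable {n : ℕ} {Ω : ℕ → Type} [∀ p, AddCommGroup (Ω p)] [∀ p, Module ℝ (Ω p)]
    {Ωb : ℕ → Type} [∀ p, AddCommGroup (Ωb p)] [∀ p, Module ℝ (Ωb p)]
    (H : HodgeData n Ω Ωb)

theorem inn_d_eq_inn_δ_of_pull_eq_zero {p : ℕ} {α : Ω p} (hα : H.pull p α = 0)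
    (β : Ω (p + 1)) : H.inn (p + 1) (H.d p α) β = H.inn p α (H.δ (p + 1) β) := by
  have hgreen := H.green p α β
  rw [hα, map_zero, LinearMap.zero_apply] at hgreen
  exact sub_eq_zero.mp hgreen

theorem eq_zero_and_eq_zero_of_inn_self_add_inn_self_eq_zero {p q : ℕ} {α : Ω p} {β : Ω q}
    (h : H.inn p α α + H.inn q β β = 0) : α = 0 ∧ β = 0 := by
  have hα := H.inn_self_nonneg p α
  have hβ := H.inn_self_nonneg q β
  exact ⟨H.inn_def p α (by linarith), H.inn_def q β (by linarith)⟩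

theorem d_eq_zero_and_δ_eq_zero_of_harmonic {p : ℕ} {η : Ω (p + 1)}
    (hlap : H.d p (H.δ (p + 1) η) = - H.δ (p + 2) (H.d (p + 1) η))
    (hpull : H.pull (p + 1) η = 0) (hδpull : H.pull p (H.δ (p + 1) η) = 0) :
    H.d (p + 1) η = 0 ∧ H.δ (p + 1) η = 0 := by
  have hδ : H.inn p (H.δ (p + 1) η) (H.δ (p + 1) η)
      = - H.inn (p + 2) (H.d (p + 1) η) (H.d (p + 1) η) := by
    rw [← H.inn_d_eq_inn_δ_of_pull_eq_zero hδpull, hlap, map_neg, LinearMap.neg_apply,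
      H.inn_symm, H.inn_d_eq_inn_δ_of_pull_eq_zero hpull]
  exact (H.eq_zero_and_eq_zero_of_inn_self_add_inn_self_eq_zero (p := p) (q := p + 2)
    (by linarith)).symm

end HodgeData

/-- Let `ω` solve the boundary value problem `Δω = 0`, `i^*ω = φ`,
`i^*(d^*ω) = 0` (harmonicity `Δω = 0` is written equivalently as `dd^*ω = −d^*dω`) on a compact oriented Riemannian manifold with boundary.  If `ω'` is
another solution, then `ω − ω'` is a Dirichlet harmonic field:  `d(ω−ω') = 0`,
`d^*(ω−ω') = 0` and `i^*(ω−ω') = 0`.  Hence the solution is unique up to addition of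
an element of `Harm^p_D(M)`. -/
theorem bvp_solutions_differ_by_dirichlet_field
    {n : ℕ} {Ω : ℕ → Type} [∀ p, AddCommGroup (Ω p)] [∀ p, Module ℝ (Ω p)]
    {Ωb : ℕ → Type} [∀ p, AddCommGroup (Ωb p)] [∀ p, Module ℝ (Ωb p)]
    (H : HodgeData n Ω Ωb) (p : ℕ) (φ : Ωb (p + 1)) (ω ω' : Ω (p + 1))
    (hlap : H.d p (H.δ (p + 1) ω) = - H.δ (p + 2) (H.d (p + 1) ω))
    (hpull : H.pull (p + 1) ω = φ)
    (hδbd : H.pull p (H.δ (p + 1) ω) = 0)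
    (hlap' : H.d p (H.δ (p + 1) ω') = - H.δ (p + 2) (H.d (p + 1) ω'))
    (hpull' : H.pull (p + 1) ω' = φ)
    (hδbd' : H.pull p (H.δ (p + 1) ω') = 0) :
    H.d (p + 1) (ω - ω') = 0 ∧ H.δ (p + 1) (ω - ω') = 0 ∧
      H.pull (p + 1) (ω - ω') = 0 := by
  have hpull_sub : H.pull (p + 1) (ω - ω') = 0 := by rw [map_sub, hpull, hpull', sub_self]
  have hδbd_sub : H.pull p (H.δ (p + 1) (ω - ω')) = 0 := by
    rw [map_sub, map_sub, hδbd, hδbd', sub_self]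
  have hlap_sub : H.d p (H.δ (p + 1) (ω - ω')) = - H.δ (p + 2) (H.d (p + 1) (ω - ω')) := by
    rw [map_sub, map_sub, hlap, hlap', map_sub, map_sub, neg_sub, neg_sub_neg]
  obtain ⟨hd, hδ⟩ := H.d_eq_zero_and_δ_eq_zero_of_harmonic hlap_sub hpull_sub hδbd_sub
  exact ⟨hd, hδ, hpull_sub⟩
end
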